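/- arXiv:2504.19792 — 6 statements merged into one kernel-verified Lean document; each statement's English description precedes it below -/
import Mathlib

section
/- Let A be a positive definite symmetric matrix in R^{n×n} with eigenvalues 0 < λ_1 ≤ λ_2 ≤ ... ≤ λ_n. If u_1, ..., u_k ∈ R^n are pairwise orthogonal and satisfy u_i^T A u_i = 1 for all i, then ‖u_1‖² + ... + ‖u_k‖² ≤ λ_1^{-1} + ... + λ_k^{-1}, with equality only if the diagonal entries of U^T U (where U has columns u_i, sorted in decreasing order) equal λ_1^{-1}, ..., λ_k^{-1}. -/
open Matrix

lemma aux_dual {n : ℕ} {v : Fin n → Fin n → ℝ}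
    (hON : ∀ i j, v i ⬝ᵥ v j = if i = j then (1:ℝ) else 0) (a b : Fin n) :
    ∑ l, v l a * v l b = if a = b then (1:ℝ) else 0 := by
  have hVVt : (Matrix.of v) * (Matrix.of v)ᵀ = 1 := by
    ext i j
    simpa [Matrix.mul_apply, Matrix.transpose_apply, dotProduct, Matrix.one_apply] using hON i j
  have hVtV : (Matrix.of v)ᵀ * (Matrix.of v) = 1 := mul_eq_one_comm.mp hVVt
  have := congrFun (congrFun hVtV a) b
  simpa [Matrix.mul_apply, Matrix.transpose_apply, Matrix.one_apply] using this

lemma aux_parseval {n : ℕ} {v : Fin n → Fin n → ℝ}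
    (hON : ∀ i j, v i ⬝ᵥ v j = if i = j then (1:ℝ) else 0) (x y : Fin n → ℝ) :
    x ⬝ᵥ y = ∑ l, (x ⬝ᵥ v l) * (y ⬝ᵥ v l) := by
  calc x ⬝ᵥ y = ∑ a, ∑ b, x a * y b * (if a = b then (1:ℝ) else 0) := by
        simp [dotProduct, mul_ite]
    _ = ∑ a, ∑ b, x a * y b * ∑ l, v l a * v l b := by
        refine Finset.sum_congr rfl fun a _ => Finset.sum_congr rfl fun b _ => ?_
        rw [aux_dual hON]
    _ = ∑ a, ∑ b, ∑ l, x a * v l a * (y b * v l b) := by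
        refine Finset.sum_congr rfl fun a _ => Finset.sum_congr rfl fun b _ => ?_
        rw [Finset.mul_sum]; exact Finset.sum_congr rfl fun l _ => by ring
    _ = ∑ l, ∑ a, ∑ b, x a * v l a * (y b * v l b) := by
        have : ∀ a : Fin n, ∑ b, ∑ l, x a * v l a * (y b * v l b)
            = ∑ l, ∑ b, x a * v l a * (y b * v l b) := fun a => Finset.sum_comm
        simp only [this]
        exact Finset.sum_comm
    _ = ∑ l, (x ⬝ᵥ v l) * (y ⬝ᵥ v l) := by
        refine Finset.sum_congr rfl fun l _ => ?_
        rw [dotProduct, dotProduct, Finset.sum_mul_sum]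

lemma aux_quad {n : ℕ} {A : Matrix (Fin n) (Fin n) ℝ} (hA : A.PosDef)
    {lam : Fin n → ℝ} {v : Fin n → Fin n → ℝ}
    (hON : ∀ i j, v i ⬝ᵥ v j = if i = j then (1:ℝ) else 0)
    (heig : ∀ i, A.mulVec (v i) = lam i • v i) (x y : Fin n → ℝ) :
    x ⬝ᵥ A.mulVec y = ∑ l, lam l * ((x ⬝ᵥ v l) * (y ⬝ᵥ v l)) := by
  have hsym : Aᵀ = A := by
    have := hA.isHermitian
    rwa [Matrix.IsHermitian, Matrix.conjTranspose_eq_transpose_of_trivial] at this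
  rw [aux_parseval hON x (A.mulVec y)]
  refine Finset.sum_congr rfl fun l _ => ?_
  have h1 : (A.mulVec y) ⬝ᵥ v l = lam l * (y ⬝ᵥ v l) := by
    rw [dotProduct_comm, Matrix.dotProduct_mulVec, ← hsym, Matrix.vecMul_transpose,
      heig, smul_dotProduct, smul_eq_mul, dotProduct_comm (v l) y]
  rw [h1]; ring

lemma aux_sum_castLE {n k : ℕ} (hk : k ≤ n) (f : Fin n → ℝ) :
    ∑ i : Fin k, f (Fin.castLE hk i) = ∑ j : Fin n, if (j:ℕ) < k then f j else 0 := by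
  rw [Finset.sum_ite, Finset.sum_const_zero, add_zero]
  refine Finset.sum_bij (fun (i : Fin k) _ => Fin.castLE hk i) ?_ ?_ ?_ ?_
  · intro a _; simp only [Finset.mem_filter, Finset.mem_univ, true_and]; exact a.isLt
  · intro a _ b _ h; exact Fin.castLE_injective hk h
  · intro b hb
    simp only [Finset.mem_filter, Finset.mem_univ, true_and] at hb
    exact ⟨⟨(b:ℕ), hb⟩, Finset.mem_univ _, rfl⟩
  · intro a _; rfl

lemma aux_dot_sum {m : Type*} [Fintype m] {ι : Type*} (s : Finset ι)
    (x : m → ℝ) (f : ι → m → ℝ) :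
    x ⬝ᵥ (∑ i ∈ s, f i) = ∑ i ∈ s, x ⬝ᵥ f i := by
  simp only [dotProduct, Finset.sum_apply, Finset.mul_sum]
  exact Finset.sum_comm

lemma aux_sum_dot {m : Type*} [Fintype m] {ι : Type*} (s : Finset ι)
    (f : ι → m → ℝ) (x : m → ℝ) :
    (∑ i ∈ s, f i) ⬝ᵥ x = ∑ i ∈ s, f i ⬝ᵥ x := by
  simp only [dotProduct, Finset.sum_apply, Finset.sum_mul]
  exact Finset.sum_comm

/-- If `A` is positive definite with monotone positive eigenvalues `lam` (with
orthonormal eigenbasis `v`), and `u 0, ..., u (k-1)` are pairwise orthogonal with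
`uᵢᵀ A uᵢ = 1`, then `∑ ‖uᵢ‖² ≤ ∑_{i<k} (lam i)⁻¹`, with equality only if the
squared norms of the `uᵢ` are (up to permutation) exactly `(lam 0)⁻¹, ..., (lam (k-1))⁻¹`. -/
theorem stmt2 {n k : ℕ} (hk : k ≤ n) (A : Matrix (Fin n) (Fin n) ℝ)
    (hA : A.PosDef) (lam : Fin n → ℝ) (hmono : Monotone lam) (hpos : ∀ i, 0 < lam i)
    (v : Fin n → Fin n → ℝ)
    (hON : ∀ i j, v i ⬝ᵥ v j = if i = j then (1 : ℝ) else 0)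
    (heig : ∀ i, A.mulVec (v i) = lam i • v i)
    (u : Fin k → Fin n → ℝ)
    (horth : ∀ i j, i ≠ j → u i ⬝ᵥ u j = 0)
    (hnorm : ∀ i, u i ⬝ᵥ A.mulVec (u i) = 1) :
    (∑ i, u i ⬝ᵥ u i ≤ ∑ i : Fin k, (lam (Fin.castLE hk i))⁻¹) ∧
    ((∑ i, u i ⬝ᵥ u i = ∑ i : Fin k, (lam (Fin.castLE hk i))⁻¹) →
      ∃ σ : Equiv.Perm (Fin k), ∀ i, u (σ i) ⬝ᵥ u (σ i) = (lam (Fin.castLE hk i))⁻¹) := by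
  classical
  rcases Nat.eq_zero_or_pos k with hk0 | hk1
  · subst hk0
    exact ⟨by simp, fun _ => ⟨Equiv.refl _, fun i => i.elim0⟩⟩
  -- coefficients in the eigenbasis
  set c : Fin k → Fin n → ℝ := fun i j => u i ⬝ᵥ v j with hcdef
  set q : Fin k → ℝ := fun i => ∑ j, (c i j)^2 with hqdef
  have hq_eq : ∀ i, u i ⬝ᵥ u i = q i := by
    intro i
    rw [aux_parseval hON, hqdef]
    exact Finset.sum_congr rfl fun j _ => (sq _).symm
  have hAc : ∀ i, ∑ j, lam j * (c i j)^2 = 1 := by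
    intro i
    have h := hnorm i
    rw [aux_quad hA hON heig] at h
    rw [← h]
    exact Finset.sum_congr rfl fun j _ => by rw [sq]
  have hqpos : ∀ i, 0 < q i := by
    intro i
    rcases (Finset.sum_nonneg (fun j (_ : j ∈ Finset.univ) => sq_nonneg (c i j))).lt_or_eq
      with h | h
    · exact h
    · exfalso
      have hz : ∀ j, c i j = 0 := by
        intro j
        have := (Finset.sum_eq_zero_iff_of_nonneg
          (fun j (_ : j ∈ Finset.univ) => sq_nonneg (c i j))).mp h.symm j (Finset.mem_univ j)
        exact pow_eq_zero_iff (by norm_num) |>.mp this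
      have := hAc i
      simp [hz] at this
  have horthc : ∀ i i', i ≠ i' → ∑ j, c i j * c i' j = 0 := by
    intro i i' h
    rw [← aux_parseval hON]
    exact horth i i' h
  set R : Fin k → ℝ := fun i => ∑ j, (lam j)⁻¹ * (c i j)^2 with hRdef
  -- Cauchy–Schwarz: q i ^ 2 ≤ (∑ lam c²) * R i = R i
  have hCS : ∀ i, q i ^ 2 ≤ R i := by
    intro i
    have key := Finset.sum_mul_sq_le_sq_mul_sq Finset.univ
      (fun j => Real.sqrt (lam j) * c i j) (fun j => c i j / Real.sqrt (lam j))
    have e1 : ∀ j : Fin n, Real.sqrt (lam j) * c i j * (c i j / Real.sqrt (lam j))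
        = (c i j)^2 := by
      intro j
      have hs : Real.sqrt (lam j) ≠ 0 := (Real.sqrt_pos.mpr (hpos j)).ne'
      field_simp
    have e2 : ∀ j : Fin n, (Real.sqrt (lam j) * c i j)^2 = lam j * (c i j)^2 := by
      intro j
      rw [mul_pow, Real.sq_sqrt (hpos j).le]
    have e3 : ∀ j : Fin n, (c i j / Real.sqrt (lam j))^2 = (lam j)⁻¹ * (c i j)^2 := by
      intro j
      rw [div_pow, Real.sq_sqrt (hpos j).le, div_eq_inv_mul]
    simp only [e1, e2, e3] at key
    rw [hAc i, one_mul] at key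
    rw [hqdef]
    exact key
  have hqR : ∀ i, q i ≤ R i / q i := by
    intro i
    rw [le_div_iff₀ (hqpos i)]
    calc q i * q i = q i ^ 2 := (sq _).symm
      _ ≤ R i := hCS i
  set t : Fin n → ℝ := fun j => ∑ i, (c i j)^2 / q i with htdef
  have hRt : ∑ i, R i / q i = ∑ j, (lam j)⁻¹ * t j := by
    rw [htdef]
    simp only [hRdef, Finset.sum_div, Finset.mul_sum]
    rw [Finset.sum_comm]
    exact Finset.sum_congr rfl fun j _ => Finset.sum_congr rfl fun i _ => by
      rw [mul_div_assoc]
  have htnn : ∀ j, 0 ≤ t j :=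
    fun j => Finset.sum_nonneg fun i _ => div_nonneg (sq_nonneg _) (hqpos i).le
  -- Bessel: t j ≤ 1
  have ht1 : ∀ j, t j ≤ 1 := by
    intro j
    set y : Fin n → ℝ := v j - ∑ i, (c i j / q i) • u i with hydef
    have hynn : 0 ≤ y ⬝ᵥ y := Finset.sum_nonneg fun l _ => mul_self_nonneg _
    have hexp : y ⬝ᵥ y = 1 - t j := by
      rw [hydef, sub_dotProduct, dotProduct_sub, dotProduct_sub,
        aux_dot_sum, aux_sum_dot, aux_sum_dot]
      have hvv : v j ⬝ᵥ v j = 1 := by simpa using hON j j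
      have hvu : ∀ i, v j ⬝ᵥ ((c i j / q i) • u i) = (c i j)^2 / q i := by
        intro i
        rw [dotProduct_smul, smul_eq_mul, dotProduct_comm]
        rw [hcdef]
        ring
      have huv : ∀ i, ((c i j / q i) • u i) ⬝ᵥ v j = (c i j)^2 / q i := by
        intro i
        rw [smul_dotProduct, smul_eq_mul, hcdef]
        ring
      have huu : ∀ i, ((c i j / q i) • u i) ⬝ᵥ (∑ i', (c i' j / q i') • u i')
          = (c i j)^2 / q i := by
        intro i
        rw [aux_dot_sum]
        rw [Finset.sum_eq_single i]
        · rw [smul_dotProduct, dotProduct_smul, smul_eq_mul, smul_eq_mul,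
            hq_eq i, div_mul_cancel₀ _ (hqpos i).ne', div_mul_eq_mul_div, ← sq]
        · intro i' _ hne
          rw [smul_dotProduct, dotProduct_smul, smul_eq_mul, smul_eq_mul,
            horth i i' (fun h => hne h.symm)]
          ring
        · intro h; exact absurd (Finset.mem_univ i) h
      simp only [hvv, hvu, huv, huu]
      simp only [htdef]
      ring
    linarith
  have hsumt : ∑ j, t j = (k : ℝ) := by
    rw [htdef]
    rw [Finset.sum_comm]
    have : ∀ i : Fin k, ∑ j, (c i j)^2 / q i = 1 := by
      intro i
      rw [← Finset.sum_div]
      have hqi : (∑ j, (c i j)^2) = q i := rfl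
      rw [hqi, div_self (hqpos i).ne']
    simp [this]
  set s : Fin n → ℝ := fun j => if (j:ℕ) < k then (1:ℝ) else 0 with hsdef
  have hsums : ∑ j, s j = (k : ℝ) := by
    rw [hsdef, ← aux_sum_castLE hk (fun _ => (1:ℝ))]
    simp
  have hRHS : ∑ i : Fin k, (lam (Fin.castLE hk i))⁻¹ = ∑ j, (lam j)⁻¹ * s j := by
    rw [aux_sum_castLE hk (fun j => (lam j)⁻¹)]
    refine Finset.sum_congr rfl fun j _ => ?_
    rw [hsdef]
    by_cases h : (j:ℕ) < k <;> simp [h]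
  have hkn : k - 1 < n := lt_of_lt_of_le (Nat.sub_lt hk1 one_pos) hk
  set kk : Fin n := ⟨k-1, hkn⟩ with hkkdef
  have hterm : ∀ j, 0 ≤ ((lam j)⁻¹ - (lam kk)⁻¹) * (s j - t j) := by
    intro j
    by_cases hjk : (j:ℕ) < k
    · have h1 : lam j ≤ lam kk := hmono (by
        show (j:ℕ) ≤ k - 1
        omega)
      have h2 : (lam kk)⁻¹ ≤ (lam j)⁻¹ := by
        apply inv_anti₀ (hpos j) h1
      have h3 : s j = 1 := by rw [hsdef]; simp [hjk]
      have h4 : t j ≤ 1 := ht1 j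
      nlinarith
    · have h1 : lam kk ≤ lam j := hmono (by
        show (k:ℕ) - 1 ≤ (j:ℕ)
        omega)
      have h2 : (lam j)⁻¹ ≤ (lam kk)⁻¹ := by
        apply inv_anti₀ (hpos kk) h1
      have h3 : s j = 0 := by rw [hsdef]; simp [hjk]
      have h4 : 0 ≤ t j := htnn j
      nlinarith
  have hsum_diff : ∑ j, ((lam j)⁻¹ - (lam kk)⁻¹) * (s j - t j)
      = ∑ j, (lam j)⁻¹ * s j - ∑ j, (lam j)⁻¹ * t j := by
    have expand : ∀ j : Fin n, ((lam j)⁻¹ - (lam kk)⁻¹) * (s j - t j)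
        = ((lam j)⁻¹ * s j - (lam j)⁻¹ * t j) - ((lam kk)⁻¹ * s j - (lam kk)⁻¹ * t j) := by
      intro j; ring
    simp only [expand]
    rw [Finset.sum_sub_distrib, Finset.sum_sub_distrib, Finset.sum_sub_distrib,
      ← Finset.mul_sum, ← Finset.mul_sum, hsums, hsumt]
    ring
  have hts : ∑ j, (lam j)⁻¹ * t j ≤ ∑ j, (lam j)⁻¹ * s j := by
    have h := Finset.sum_nonneg (fun j (_ : j ∈ Finset.univ) => hterm j)
    rw [hsum_diff] at h
    linarith
  have main : ∑ i, u i ⬝ᵥ u i ≤ ∑ i : Fin k, (lam (Fin.castLE hk i))⁻¹ := by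
    calc ∑ i, u i ⬝ᵥ u i = ∑ i, q i := Finset.sum_congr rfl fun i _ => hq_eq i
      _ ≤ ∑ i, R i / q i := Finset.sum_le_sum fun i _ => hqR i
      _ = ∑ j, (lam j)⁻¹ * t j := hRt
      _ ≤ ∑ j, (lam j)⁻¹ * s j := hts
      _ = ∑ i : Fin k, (lam (Fin.castLE hk i))⁻¹ := hRHS.symm
  refine ⟨main, fun hEq => ?_⟩
  -- equality case
  have hchain1 : ∑ i, q i = ∑ i, u i ⬝ᵥ u i := Finset.sum_congr rfl fun i _ => (hq_eq i).symm
  have hup : ∑ i, R i / q i ≤ ∑ i, q i := by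
    rw [hRt]
    calc ∑ j, (lam j)⁻¹ * t j ≤ ∑ j, (lam j)⁻¹ * s j := hts
      _ = ∑ i : Fin k, (lam (Fin.castLE hk i))⁻¹ := hRHS.symm
      _ = ∑ i, u i ⬝ᵥ u i := hEq.symm
      _ = ∑ i, q i := hchain1.symm
  have hqR_eq : ∀ i ∈ Finset.univ, q i = R i / q i :=
    (Finset.sum_eq_sum_iff_of_le (fun i _ => hqR i)).mp
      (le_antisymm (Finset.sum_le_sum fun i _ => hqR i) hup)
  have hR_eq : ∀ i, R i = q i ^ 2 := by
    intro i
    have h := hqR_eq i (Finset.mem_univ i)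
    rw [eq_div_iff (hqpos i).ne'] at h
    rw [← h, sq]
  have hts_eq : ∑ j, (lam j)⁻¹ * t j = ∑ j, (lam j)⁻¹ * s j := by
    have h1 : ∑ j, (lam j)⁻¹ * t j = ∑ i, q i := by
      rw [← hRt]
      exact Finset.sum_congr rfl fun i _ => (hqR_eq i (Finset.mem_univ i)).symm
    rw [h1, hchain1, hEq, hRHS]
  have hterm0 : ∀ j, ((lam j)⁻¹ - (lam kk)⁻¹) * (s j - t j) = 0 := by
    have hz : ∑ j, ((lam j)⁻¹ - (lam kk)⁻¹) * (s j - t j) = 0 := by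
      rw [hsum_diff, hts_eq]; ring
    intro j
    exact (Finset.sum_eq_zero_iff_of_nonneg (fun j _ => hterm j)).mp hz j (Finset.mem_univ j)
  have hst : ∀ j, lam j ≠ lam kk → t j = s j := by
    intro j hne
    have h := hterm0 j
    have hfac : (lam j)⁻¹ - (lam kk)⁻¹ ≠ 0 :=
      sub_ne_zero.mpr fun hh => hne (inv_injective hh)
    rcases mul_eq_zero.mp h with h' | h'
    · exact absurd h' hfac
    · exact (sub_eq_zero.mp h').symm
  -- Cauchy-Schwarz equality: each u i is an eigenvector with eigenvalue (q i)⁻¹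
  have E3 : ∀ i j, c i j ≠ 0 → lam j = (q i)⁻¹ := by
    intro i
    have hq0 : q i ≠ 0 := (hqpos i).ne'
    have hmu : 0 < (q i)⁻¹ := inv_pos.mpr (hqpos i)
    have hid : ∀ j : Fin n, lam j * q i + (q i)⁻¹ * (lam j)⁻¹ - 2
        = (lam j - (q i)⁻¹)^2 / (lam j * (q i)⁻¹) := by
      intro j
      have hl0 : lam j ≠ 0 := (hpos j).ne'
      field_simp
      ring
    have hkey : ∑ j, (c i j)^2 * (lam j * q i + (q i)⁻¹ * (lam j)⁻¹ - 2) = 0 := by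
      have expand : ∀ j : Fin n, (c i j)^2 * (lam j * q i + (q i)⁻¹ * (lam j)⁻¹ - 2)
          = q i * (lam j * (c i j)^2) + (q i)⁻¹ * ((lam j)⁻¹ * (c i j)^2)
            - 2 * (c i j)^2 := by
        intro j; ring
      simp only [expand]
      rw [Finset.sum_sub_distrib, Finset.sum_add_distrib, ← Finset.mul_sum, ← Finset.mul_sum,
        ← Finset.mul_sum, hAc i]
      have h1 : (∑ j, (lam j)⁻¹ * (c i j)^2) = R i := rfl
      have h2 : (∑ j, (c i j)^2) = q i := rfl
      rw [h1, h2, hR_eq i]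
      field_simp
      ring
    have hnonneg : ∀ j ∈ Finset.univ,
        0 ≤ (c i j)^2 * (lam j * q i + (q i)⁻¹ * (lam j)⁻¹ - 2) := by
      intro j _
      refine mul_nonneg (sq_nonneg _) ?_
      rw [hid j]
      exact div_nonneg (sq_nonneg _) (mul_pos (hpos j) hmu).le
    have hzero := (Finset.sum_eq_zero_iff_of_nonneg hnonneg).mp hkey
    intro j hc
    have h := hzero j (Finset.mem_univ j)
    rcases mul_eq_zero.mp h with h' | h'
    · exact absurd (pow_eq_zero_iff two_ne_zero |>.mp h') hc
    · rw [hid j] at h'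
      rcases div_eq_zero_iff.mp h' with h'' | h''
      · have := pow_eq_zero_iff two_ne_zero |>.mp h''
        linarith [sub_eq_zero.mp this]
      · exact absurd h'' (mul_pos (hpos j) hmu).ne'
  -- counting: fibers of i ↦ (q i)⁻¹ match fibers of the eigenvalue list
  have L1 : ∀ r : ℝ, ∑ j ∈ Finset.univ.filter (fun j => lam j = r), t j
      = ((Finset.univ.filter (fun i : Fin k => (q i)⁻¹ = r)).card : ℝ) := by
    intro r
    have swap : ∑ j ∈ Finset.univ.filter (fun j => lam j = r), t j
        = ∑ i, (∑ j ∈ Finset.univ.filter (fun j => lam j = r), (c i j)^2) / q i := by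
      simp only [htdef, Finset.sum_div]
      exact Finset.sum_comm
    rw [swap]
    have hterm' : ∀ i : Fin k,
        (∑ j ∈ Finset.univ.filter (fun j => lam j = r), (c i j)^2) / q i
        = if (q i)⁻¹ = r then (1:ℝ) else 0 := by
      intro i
      by_cases hi : (q i)⁻¹ = r
      · rw [if_pos hi]
        have hfull : ∑ j ∈ Finset.univ.filter (fun j => lam j = r), (c i j)^2
            = ∑ j, (c i j)^2 := by
          apply Finset.sum_subset (Finset.filter_subset _ _)
          intro j _ hj
          simp only [Finset.mem_filter, Finset.mem_univ, true_and] at hj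
          by_contra hcne
          have hc : c i j ≠ 0 := fun h => hcne (by rw [h]; ring)
          exact hj ((E3 i j hc).trans hi)
        rw [hfull]
        have hqi : (∑ j, (c i j)^2) = q i := rfl
        rw [hqi, div_self (hqpos i).ne']
      · rw [if_neg hi]
        have hzero : ∑ j ∈ Finset.univ.filter (fun j => lam j = r), (c i j)^2 = 0 := by
          apply Finset.sum_eq_zero
          intro j hj
          simp only [Finset.mem_filter, Finset.mem_univ, true_and] at hj
          have hc : c i j = 0 := by
            by_contra hc
            exact hi ((E3 i j hc).symm.trans hj)
          rw [hc]; ring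
        rw [hzero, zero_div]
    rw [Finset.sum_congr rfl fun i _ => hterm' i, Finset.sum_boole]
  have L2 : ∀ r : ℝ, ∑ j ∈ Finset.univ.filter (fun j => lam j = r), t j
      = ∑ j ∈ Finset.univ.filter (fun j => lam j = r), s j := by
    intro r
    by_cases hr : r = lam kk
    · rw [hr]
      have h1 := Finset.sum_filter_add_sum_filter_not Finset.univ (fun j => lam j = lam kk) t
      have h2 := Finset.sum_filter_add_sum_filter_not Finset.univ (fun j => lam j = lam kk) s
      have hne : ∑ j ∈ Finset.univ.filter (fun j => ¬ lam j = lam kk), t j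
          = ∑ j ∈ Finset.univ.filter (fun j => ¬ lam j = lam kk), s j :=
        Finset.sum_congr rfl fun j hj => hst j (Finset.mem_filter.mp hj).2
      rw [hsumt] at h1
      rw [hsums] at h2
      linarith
    · refine Finset.sum_congr rfl fun j hj => hst j ?_
      have hjr := (Finset.mem_filter.mp hj).2
      rw [hjr]
      exact hr
  have L3 : ∀ r : ℝ, ∑ j ∈ Finset.univ.filter (fun j => lam j = r), s j
      = ((Finset.univ.filter (fun j : Fin n => lam j = r ∧ (j:ℕ) < k)).card : ℝ) := by
    intro r
    simp only [hsdef]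
    rw [Finset.sum_boole, Finset.filter_filter]
  have hcard2 : ∀ r : ℝ,
      (Finset.univ.filter (fun i : Fin k => lam (Fin.castLE hk i) = r)).card
      = (Finset.univ.filter (fun j : Fin n => lam j = r ∧ (j:ℕ) < k)).card := by
    intro r
    apply Finset.card_bij (fun (i : Fin k) _ => Fin.castLE hk i)
    · intro a ha
      simp only [Finset.mem_filter, Finset.mem_univ, true_and] at ha ⊢
      exact ⟨ha, a.isLt⟩
    · intro a _ b _ h; exact Fin.castLE_injective hk h
    · intro b hb
      simp only [Finset.mem_filter, Finset.mem_univ, true_and] at hb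
      refine ⟨⟨(b:ℕ), hb.2⟩, ?_, Fin.ext rfl⟩
      simp only [Finset.mem_filter, Finset.mem_univ, true_and]
      have : Fin.castLE hk ⟨(b:ℕ), hb.2⟩ = b := Fin.ext rfl
      rw [this]
      exact hb.1
  have hcards : ∀ r : ℝ, (Finset.univ.filter (fun i : Fin k => (q i)⁻¹ = r)).card
      = (Finset.univ.filter (fun i : Fin k => lam (Fin.castLE hk i) = r)).card := by
    intro r
    have h := (L1 r).symm.trans ((L2 r).trans (L3 r))
    rw [hcard2 r]
    exact_mod_cast h
  have hfib : ∀ r : ℝ, Fintype.card {i : Fin k // lam (Fin.castLE hk i) = r}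
      = Fintype.card {i : Fin k // (q i)⁻¹ = r} := by
    intro r
    rw [Fintype.card_subtype, Fintype.card_subtype, hcards r]
  refine ⟨Equiv.ofFiberEquiv
    (f := fun i : Fin k => lam (Fin.castLE hk i)) (g := fun i : Fin k => (q i)⁻¹)
    (fun r => Fintype.equivOfCardEq (hfib r)), fun i => ?_⟩
  have hmap := Equiv.ofFiberEquiv_map
    (f := fun i : Fin k => lam (Fin.castLE hk i)) (g := fun i : Fin k => (q i)⁻¹)
    (fun r => Fintype.equivOfCardEq (hfib r)) i
  rw [hq_eq, ← hmap, inv_inv]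
end

section
/- For a deterministic classification context where each input x ∈ X is assigned exactly one label a_x from a finite label set A = {1,...,C}, the dual kernel satisfies k_X^+(x, x') = 1[a_x = a_{x'}] / P_A(a_x), where P_A(a) is the probability of label a under the pushforward of P_X. Consequently, the operator T_{k_X^+} has exactly C nonzero eigenvalues, all equal to 1, with eigenspace spanned by the indicator functions f_i(x) = 1[a_x = i]. -/
open MeasureTheory

/-- For a deterministic classification context with labels `a : X → Fin C`, the dual
kernel equals `1[a x = a x'] / P_A(a x)`; the indicator of each class is a fixed point
of the kernel integral operator `T`; and any eigenfunction of `T` with nonzero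
eigenvalue has eigenvalue `1` and lies in the span of the class indicators. -/
theorem stmt3 {X : Type*} [MeasurableSpace X] (P : Measure X) [IsProbabilityMeasure P]
    (C : ℕ) (a : X → Fin C) (ha : Measurable a)
    (hpos : ∀ c : Fin C, 0 < (P {x | a x = c}).toReal)
    (k : X → X → ℝ)
    (hk : ∀ x x', k x x' = ∑ c : Fin C,
      (if a x = c then (1 : ℝ) else 0) * (if a x' = c then (1 : ℝ) else 0) /
        (P {y | a y = c}).toReal)
    (T : (X → ℝ) → (X → ℝ))
    (hT : ∀ f x, T f x = ∫ x', f x' * k x x' ∂P) :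
    (∀ x x', k x x' = (if a x = a x' then (1 : ℝ) else 0) / (P {y | a y = a x}).toReal) ∧
    (∀ i : Fin C, ∀ x,
      T (fun y => if a y = i then (1 : ℝ) else 0) x = (if a x = i then (1 : ℝ) else 0)) ∧
    (∀ (f : X → ℝ) (lam : ℝ), Integrable f P → (∀ x, T f x = lam * f x) →
      lam ≠ 0 → (∃ x, f x ≠ 0) →
      lam = 1 ∧
        f ∈ Submodule.span ℝ
          (Set.range fun i : Fin C => fun y => if a y = i then (1 : ℝ) else 0)) := by
  classical
  have hmeas : ∀ c : Fin C, MeasurableSet {y | a y = c} := fun c =>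
    ha (measurableSet_singleton c)
  -- integral of a class indicator
  have hind : ∀ i : Fin C,
      ∫ y, (if a y = i then (1 : ℝ) else 0) ∂P = (P {y | a y = i}).toReal := by
    intro i
    show _ = P.real _
    rw [← integral_indicator_one (hmeas i)]
    congr 1
    funext y
    by_cases hy : a y = i
    · simp [Set.indicator_apply, hy]
    · simp [Set.indicator_apply, hy]
  -- Part 1
  have hk' : ∀ x x', k x x' =
      (if a x = a x' then (1 : ℝ) else 0) / (P {y | a y = a x}).toReal := by
    intro x x'
    rw [hk]
    rw [Finset.sum_eq_single (a x)]
    · rw [if_pos rfl, one_mul]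
      congr 1
      by_cases h : a x = a x'
      · rw [if_pos h, if_pos h.symm]
      · rw [if_neg h, if_neg fun hh => h hh.symm]
    · intro c _ hc
      simp [Ne.symm hc]
    · simp
  -- Part 2
  have hfix : ∀ i : Fin C, ∀ x,
      T (fun y => if a y = i then (1 : ℝ) else 0) x = (if a x = i then (1 : ℝ) else 0) := by
    intro i x
    rw [hT]
    by_cases hxi : a x = i
    · have h1 : ∀ y, (if a y = i then (1 : ℝ) else 0) * k x y
          = (if a y = i then (1 : ℝ) else 0) / (P {y | a y = i}).toReal := by
        intro y
        rw [hk' x y]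
        by_cases hy : a y = i
        · simp [hy, hxi]
        · simp [hy]
      rw [integral_congr_ae (ae_of_all _ h1), integral_div, hind i, if_pos hxi,
        div_self (hpos i).ne']
    · have h1 : ∀ y, (if a y = i then (1 : ℝ) else 0) * k x y = 0 := by
        intro y
        by_cases hy : a y = i
        · rw [hk' x y]
          have hne : a x ≠ a y := by rw [hy]; exact hxi
          simp [hne]
        · simp [hy]
      rw [integral_congr_ae (ae_of_all _ h1), integral_zero, if_neg hxi]
  refine ⟨hk', hfix, ?_⟩
  -- Part 3
  intro f lam hfint hTf hlam hfx
  set m : Fin C → ℝ := fun i => ∫ y, f y * (if a y = i then (1 : ℝ) else 0) ∂P with hm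
  have key : ∀ x, lam * f x = m (a x) / (P {y | a y = a x}).toReal := by
    intro x
    rw [← hTf x, hT]
    have h1 : ∀ y, f y * k x y
        = (f y * (if a y = a x then (1 : ℝ) else 0)) / (P {y | a y = a x}).toReal := by
      intro y
      rw [hk' x y]
      by_cases h : a x = a y
      · rw [if_pos h, if_pos h.symm]; ring
      · rw [if_neg h, if_neg fun hh => h hh.symm]; ring
    rw [integral_congr_ae (ae_of_all _ h1), integral_div]
  have fval : ∀ x, f x = m (a x) / ((P {y | a y = a x}).toReal * lam) := by
    intro x
    calc f x = lam⁻¹ * (lam * f x) := (inv_mul_cancel_left₀ hlam (f x)).symm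
      _ = lam⁻¹ * (m (a x) / (P {y | a y = a x}).toReal) := by rw [key x]
      _ = m (a x) / ((P {y | a y = a x}).toReal * lam) := by ring
  have mval : ∀ i, m i = m i / lam := by
    intro i
    have hmi : m i = ∫ y, f y * (if a y = i then (1 : ℝ) else 0) ∂P := by
      simp only [hm]
    have h2 : ∀ y, f y * (if a y = i then (1 : ℝ) else 0)
        = (m i / ((P {y | a y = i}).toReal * lam)) * (if a y = i then (1 : ℝ) else 0) := by
      intro y
      by_cases hy : a y = i
      · rw [fval y, hy]
      · simp [hy]
    calc m i = ∫ y, (m i / ((P {y | a y = i}).toReal * lam))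
            * (if a y = i then (1 : ℝ) else 0) ∂P := by
          rw [hmi]; exact integral_congr_ae (ae_of_all _ h2)
      _ = (m i / ((P {y | a y = i}).toReal * lam)) * (P {y | a y = i}).toReal := by
          rw [integral_const_mul, hind i]
      _ = m i / lam := by
          have hpi := (hpos i).ne'
          field_simp
  obtain ⟨x0, hx0⟩ := hfx
  have hm0 : m (a x0) ≠ 0 := fun h => hx0 (by rw [fval x0, h, zero_div])
  have hlam1 : lam = 1 := by
    have h := mval (a x0)
    have h2 : m (a x0) * lam = m (a x0) := by
      nth_rewrite 1 [h]
      exact div_mul_cancel₀ _ hlam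
    exact mul_left_cancel₀ hm0 (by rw [mul_one]; exact h2)
  refine ⟨hlam1, ?_⟩
  have hf_eq : f = ∑ i : Fin C, (m i / ((P {y | a y = i}).toReal * lam)) •
      (fun y => if a y = i then (1 : ℝ) else 0) := by
    funext x
    rw [fval x]
    simp only [Finset.sum_apply, Pi.smul_apply, smul_eq_mul]
    rw [Finset.sum_eq_single (a x)]
    · simp
    · intro c _ hc
      simp [Ne.symm hc]
    · simp
  rw [hf_eq]
  exact Submodule.sum_mem _ fun i _ =>
    Submodule.smul_mem _ _ (Submodule.subset_span ⟨i, rfl⟩)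
end

section
/- Let s_1 ≥ s_2 ≥ ... ≥ 0 with s_1 ≤ 1, and let ε ∈ (0, 1) with 1 − ε ≤ s_1 and s_{d+1} < 1 − ε. Over unit vectors u = (u_1, u_2, ...) in ℓ² satisfying the compatibility constraint ∑_i s_i² u_i² ≥ (1−ε)² ∑_i u_i², the worst-case tail mass ∑_{i > d} u_i² over all such u equals (s_1² − (1−ε)²)/(s_1² − s_{d+1}²). -/
set_option maxHeartbeats 1000000


/-- Over unit vectors `u ∈ ℓ²` satisfying the compatibility constraint
`∑ sᵢ² uᵢ² ≥ (1−ε)² ∑ uᵢ²`, the worst-case tail mass `∑_{i ≥ d} uᵢ²`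
(0-based indexing: `s 0 = s₁`, `s d = s_{d+1}`) equals
`(s₁² − (1−ε)²)/(s₁² − s_{d+1}²)`, and is attained. -/
theorem stmt5 (s : ℕ → ℝ) (hs : Antitone s) (hsnn : ∀ i, 0 ≤ s i) (hs1 : s 0 ≤ 1)
    (d : ℕ) (ε : ℝ) (hε0 : 0 < ε) (hε1 : ε < 1) (h1 : 1 - ε ≤ s 0) (h2 : s d < 1 - ε) :
    IsGreatest
      { t : ℝ | ∃ u : ℕ → ℝ, Summable (fun i => u i ^ 2) ∧ (∑' i, u i ^ 2) = 1 ∧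
          (1 - ε) ^ 2 * (∑' i, u i ^ 2) ≤ ∑' i, s i ^ 2 * u i ^ 2 ∧
          t = ∑' i, u (i + d) ^ 2 }
      ((s 0 ^ 2 - (1 - ε) ^ 2) / (s 0 ^ 2 - s d ^ 2)) := by
  have hd : d ≠ 0 := by rintro rfl; linarith
  have hsd0 : (0:ℝ) ≤ s d := hsnn d
  have hden : 0 < s 0 ^ 2 - s d ^ 2 := by nlinarith
  set T := (s 0 ^ 2 - (1 - ε) ^ 2) / (s 0 ^ 2 - s d ^ 2) with hTdef
  have hT0 : 0 ≤ T := div_nonneg (by nlinarith) hden.le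
  have hT1 : T ≤ 1 := by rw [div_le_one hden]; nlinarith
  have hTcancel : T * (s 0 ^ 2 - s d ^ 2) = s 0 ^ 2 - (1 - ε) ^ 2 :=
    div_mul_cancel₀ _ hden.ne'
  constructor
  · -- membership: witness supported on {0, d}
    refine ⟨fun i => if i = 0 then Real.sqrt (1 - T) else if i = d then Real.sqrt T else 0,
      ?_, ?_, ?_, ?_⟩
    · apply summable_of_ne_finset_zero (s := {0, d})
      intro i hi
      simp only [Finset.mem_insert, Finset.mem_singleton, not_or] at hi
      simp [hi.1, hi.2]
    · rw [tsum_eq_sum (s := {0, d}) (by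
        intro i hi
        simp only [Finset.mem_insert, Finset.mem_singleton, not_or] at hi
        simp [hi.1, hi.2])]
      rw [Finset.sum_pair (Ne.symm hd)]
      simp only [if_pos rfl, if_neg hd, if_neg (Ne.symm hd), if_true]
      rw [Real.sq_sqrt (by linarith), Real.sq_sqrt hT0]
      ring
    · have hlhs : (∑' i, s i ^ 2 *
          ((if i = 0 then Real.sqrt (1 - T) else if i = d then Real.sqrt T else 0)) ^ 2)
          = s 0 ^ 2 * (1 - T) + s d ^ 2 * T := by
        rw [tsum_eq_sum (s := {0, d}) (by
          intro i hi
          simp only [Finset.mem_insert, Finset.mem_singleton, not_or] at hi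
          simp [hi.1, hi.2])]
        rw [Finset.sum_pair (Ne.symm hd)]
        simp only [if_pos rfl, if_neg hd, if_neg (Ne.symm hd), if_true]
        rw [Real.sq_sqrt (by linarith), Real.sq_sqrt hT0]
      rw [hlhs]
      have hmul : (1 - ε) ^ 2 ≤ s 0 ^ 2 * (1 - T) + s d ^ 2 * T := by nlinarith [hTcancel]
      calc (1 - ε) ^ 2 * (∑' i, ((if i = 0 then Real.sqrt (1 - T)
              else if i = d then Real.sqrt T else 0)) ^ 2)
          ≤ (1 - ε) ^ 2 * 1 := by
            apply mul_le_mul_of_nonneg_left _ (by positivity)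
            rw [tsum_eq_sum (s := {0, d}) (by
              intro i hi
              simp only [Finset.mem_insert, Finset.mem_singleton, not_or] at hi
              simp [hi.1, hi.2])]
            rw [Finset.sum_pair (Ne.symm hd)]
            simp only [if_pos rfl, if_neg hd, if_neg (Ne.symm hd), if_true]
            rw [Real.sq_sqrt (by linarith), Real.sq_sqrt hT0]
            linarith
        _ ≤ s 0 ^ 2 * (1 - T) + s d ^ 2 * T := by linarith [hmul]
    · rw [tsum_eq_single 0 (by
        intro i hi
        have h1 : i + d ≠ 0 := by omega
        have h2 : i + d ≠ d := by omega
        simp [h1, h2, hi])]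
      simp only [Nat.zero_add, if_neg hd, if_pos rfl, if_true]
      rw [Real.sq_sqrt hT0]
  · -- upper bound
    rintro t ⟨u, hsum, hnorm, hcon, rfl⟩
    have htail : Summable (fun i => u (i + d) ^ 2) := (summable_nat_add_iff d).2 hsum
    have htail0 : 0 ≤ ∑' i, u (i + d) ^ 2 := tsum_nonneg (fun i => sq_nonneg _)
    have hsplit := Summable.sum_add_tsum_nat_add d hsum
    rw [hnorm] at hsplit
    set τ := ∑' i, u (i + d) ^ 2 with hτ
    have hhead : ∑ i ∈ Finset.range d, u i ^ 2 = 1 - τ := by linarith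
    have hsSum : Summable (fun i => s i ^ 2 * u i ^ 2) := by
      apply Summable.of_nonneg_of_le (fun i => by positivity)
        (fun i => ?_) hsum
      have h1' : s i ≤ 1 := le_trans (hs (Nat.zero_le i)) hs1
      have hsq : s i ^ 2 ≤ 1 := by nlinarith [hsnn i]
      simpa using mul_le_mul_of_nonneg_right hsq (sq_nonneg (u i))
    have hsplit2 := Summable.sum_add_tsum_nat_add d hsSum
    have hb1 : ∑ i ∈ Finset.range d, s i ^ 2 * u i ^ 2 ≤ s 0 ^ 2 * (1 - τ) := by
      rw [← hhead, Finset.mul_sum]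
      apply Finset.sum_le_sum
      intro i _
      have h1' : s i ≤ s 0 := hs (Nat.zero_le i)
      have hsq : s i ^ 2 ≤ s 0 ^ 2 := by nlinarith [hsnn i]
      exact mul_le_mul_of_nonneg_right hsq (sq_nonneg (u i))
    have hle : ∀ i, s (i + d) ^ 2 * u (i + d) ^ 2 ≤ s d ^ 2 * u (i + d) ^ 2 := by
      intro i
      have h1' : s (i + d) ≤ s d := hs (Nat.le_add_left d i)
      have hsq : s (i + d) ^ 2 ≤ s d ^ 2 := by nlinarith [hsnn (i + d)]
      exact mul_le_mul_of_nonneg_right hsq (sq_nonneg (u (i + d)))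
    have hb2 : (∑' i, s (i + d) ^ 2 * u (i + d) ^ 2) ≤ s d ^ 2 * τ :=
      calc (∑' i, s (i + d) ^ 2 * u (i + d) ^ 2)
          ≤ ∑' i, s d ^ 2 * u (i + d) ^ 2 :=
            Summable.tsum_le_tsum hle ((summable_nat_add_iff d).2 hsSum) (htail.mul_left _)
        _ = s d ^ 2 * τ := tsum_mul_left
    have hkey : (1 - ε) ^ 2 ≤ s 0 ^ 2 * (1 - τ) + s d ^ 2 * τ := by
      rw [hnorm] at hcon
      linarith [hcon, hsplit2]
    rw [hTdef, le_div_iff₀ hden]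
    nlinarith
end

section
/- Suppose P_train = (1−ε)P' + ε·P̃' for probability distributions P', P̃' on a common space, where 0 < ε < 1/2. If also P_train = (1−ε)P + ε·P̃ for some P, P̃, then the total variation distance satisfies TV(P, P') ≤ ε/(1−ε). -/
open MeasureTheory

/-- Total variation distance between two measures. -/
noncomputable def tvDist {Ω : Type*} [MeasurableSpace Ω] (P P' : Measure Ω) : ℝ :=
  sSup { r : ℝ | ∃ A : Set Ω, MeasurableSet A ∧ r = |(P A).toReal - (P' A).toReal| }

/-- If `P_train = (1−ε)P' + ε P̃' = (1−ε)P + ε P̃` for probability measures and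
`0 < ε < 1/2`, then `TV(P, P') ≤ ε/(1−ε)`. -/
theorem stmt12 {Ω : Type*} [MeasurableSpace Ω]
    (Ptrain P P' Pt Pt' : Measure Ω)
    [IsProbabilityMeasure Ptrain] [IsProbabilityMeasure P] [IsProbabilityMeasure P']
    [IsProbabilityMeasure Pt] [IsProbabilityMeasure Pt']
    (ε : ℝ) (hε0 : 0 < ε) (hε1 : ε < 1 / 2)
    (h1 : Ptrain = ENNReal.ofReal (1 - ε) • P' + ENNReal.ofReal ε • Pt')
    (h2 : Ptrain = ENNReal.ofReal (1 - ε) • P + ENNReal.ofReal ε • Pt) :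
    tvDist P P' ≤ ε / (1 - ε) := by
  have hε1' : (0:ℝ) < 1 - ε := by linarith
  apply Real.sSup_le
  · rintro r ⟨A, hA, rfl⟩
    have hP := congrArg (fun μ : Measure Ω => μ A) (h1.symm.trans h2)
    simp only [Measure.coe_add, Measure.coe_smul, Pi.add_apply, Pi.smul_apply,
      smul_eq_mul] at hP
    have hP' := congrArg ENNReal.toReal hP
    rw [ENNReal.toReal_add (ENNReal.mul_ne_top ENNReal.ofReal_ne_top (measure_ne_top _ _))
        (ENNReal.mul_ne_top ENNReal.ofReal_ne_top (measure_ne_top _ _)),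
      ENNReal.toReal_add (ENNReal.mul_ne_top ENNReal.ofReal_ne_top (measure_ne_top _ _))
        (ENNReal.mul_ne_top ENNReal.ofReal_ne_top (measure_ne_top _ _)),
      ENNReal.toReal_mul, ENNReal.toReal_mul, ENNReal.toReal_mul, ENNReal.toReal_mul,
      ENNReal.toReal_ofReal hε1'.le, ENNReal.toReal_ofReal hε0.le] at hP'
    set a := (P A).toReal
    set a' := (P' A).toReal
    set b := (Pt A).toReal
    set b' := (Pt' A).toReal
    have hb0 : 0 ≤ b := ENNReal.toReal_nonneg
    have hb'0 : 0 ≤ b' := ENNReal.toReal_nonneg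
    have hb1 : b ≤ 1 := by
      simpa using ENNReal.toReal_mono ENNReal.one_ne_top (prob_le_one (μ := Pt) (s := A))
    have hb'1 : b' ≤ 1 := by
      simpa using ENNReal.toReal_mono ENNReal.one_ne_top (prob_le_one (μ := Pt') (s := A))
    have keq : (1 - ε) * (a - a') = ε * (b' - b) := by linarith
    have key : (1 - ε) * |a - a'| = ε * |b' - b| := by
      rw [← abs_of_pos hε1', ← abs_mul, keq, abs_mul, abs_of_pos hε0]
    have hb : |b' - b| ≤ 1 := abs_le.mpr ⟨by linarith, by linarith⟩
    rw [le_div_iff₀ hε1']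
    nlinarith [abs_nonneg (a - a'), abs_nonneg (b' - b)]
  · positivity
end

section
/- Consider gradient descent on a linear model θ ∈ R^d with squared loss on n ≤ d training points (x_i, y_i) with x_1,...,x_n linearly independent, using (possibly time-varying) nonnegative sample weights q_i^{(t)} summing to 1, that converge to limits q_i with min_i q_i = q* > 0. Then there exists η₀ > 0 such that for any learning rate η ≤ η₀, the unweighted empirical squared risk (1/n)∑_i (⟨θ^{(t)}, x_i⟩ − y_i)² converges to 0 as t → ∞. -/
set_option maxHeartbeats 1000000


open Matrix Filter

private lemma dot_swap {m p : ℕ} (A : Matrix (Fin m) (Fin p) ℝ) (a : Fin p → ℝ)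
    (b : Fin m → ℝ) : (A *ᵥ a) ⬝ᵥ b = a ⬝ᵥ (Aᵀ *ᵥ b) := by
  simp only [dotProduct, Matrix.mulVec, Matrix.transpose_apply, Finset.sum_mul,
    Finset.mul_sum]
  rw [Finset.sum_comm]
  exact Finset.sum_congr rfl fun j _ => Finset.sum_congr rfl fun i _ => by ring

private lemma quadform_le {m : ℕ} (A : Matrix (Fin m) (Fin m) ℝ) (u : Fin m → ℝ) :
    u ⬝ᵥ (A *ᵥ u) ≤ (∑ i, ∑ j, |A i j|) * ∑ i, u i ^ 2 := by
  have hS : ∀ i, u i ^ 2 ≤ ∑ k, u k ^ 2 := fun i =>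
    Finset.single_le_sum (f := fun k => u k ^ 2) (fun k _ => sq_nonneg _) (Finset.mem_univ i)
  calc u ⬝ᵥ (A *ᵥ u) = ∑ i, ∑ j, u i * (A i j * u j) := by
        simp [dotProduct, Matrix.mulVec, Finset.mul_sum]
    _ ≤ ∑ i, ∑ j, |A i j| * ∑ k, u k ^ 2 := by
        refine Finset.sum_le_sum fun i _ => Finset.sum_le_sum fun j _ => ?_
        nlinarith [hS i, hS j, sq_nonneg (u i + u j), sq_nonneg (u i - u j),
          le_abs_self (A i j), neg_abs_le (A i j), abs_nonneg (A i j)]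
    _ = (∑ i, ∑ j, |A i j|) * ∑ i, u i ^ 2 := by
        simp [Finset.sum_mul]

private lemma sum_dot {m k : ℕ} (f : Fin k → Fin m → ℝ) (w : Fin m → ℝ) :
    (∑ i, f i) ⬝ᵥ w = ∑ i, f i ⬝ᵥ w := by
  simp only [dotProduct, Finset.sum_apply, Finset.sum_mul]
  exact Finset.sum_comm

private lemma gram_quad {m p : ℕ} (x : Fin m → Fin p → ℝ) (v : Fin m → ℝ) :
    v ⬝ᵥ ((Matrix.of fun i j => x i ⬝ᵥ x j) *ᵥ v) = ∑ k, (∑ i, v i * x i k) ^ 2 := by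
  simp only [dotProduct, Matrix.mulVec, Matrix.of_apply, pow_two, Finset.sum_mul,
    Finset.mul_sum]
  have h1 : ∀ a : Fin m, ∑ b : Fin m, ∑ k : Fin p, v a * (x a k * x b k * v b)
      = ∑ k : Fin p, ∑ b : Fin m, v a * (x a k * x b k * v b) :=
    fun a => Finset.sum_comm
  simp only [h1]
  rw [Finset.sum_comm]
  refine Finset.sum_congr rfl fun k _ => ?_
  rw [Finset.sum_comm]
  exact Finset.sum_congr rfl fun i _ => Finset.sum_congr rfl fun j _ => by ring

/-- Gradient descent with (time-varying) nonnegative weights `q t` summing to 1 and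
converging to positive limits, on a linear model with squared loss and linearly
independent inputs: for small enough learning rate, the unweighted empirical squared
risk converges to 0. -/
theorem stmt14 {d n : ℕ} (hn : n ≤ d) (x : Fin n → Fin d → ℝ) (y : Fin n → ℝ)
    (hind : LinearIndependent ℝ x)
    (q : ℕ → Fin n → ℝ) (hqnn : ∀ t i, 0 ≤ q t i) (hqsum : ∀ t, ∑ i, q t i = 1)
    (qlim : Fin n → ℝ)
    (hconv : ∀ i, Tendsto (fun t => q t i) atTop (nhds (qlim i)))
    (hqpos : ∀ i, 0 < qlim i) :
    ∃ η₀ > (0 : ℝ), ∀ η : ℝ, 0 < η → η ≤ η₀ →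
      ∀ θ : ℕ → Fin d → ℝ,
        (∀ t, θ (t + 1) = θ t - η • ∑ i, q t i • ((θ t ⬝ᵥ x i - y i) • x i)) →
        Tendsto (fun t => (1 / (n : ℝ)) * ∑ i, (θ t ⬝ᵥ x i - y i) ^ 2) atTop (nhds 0) := by
  by_cases hn0 : n = 0
  · refine ⟨1, one_pos, fun η _ _ θ _ => ?_⟩
    subst hn0
    simpa using (tendsto_const_nhds : Tendsto (fun _ : ℕ => (0 : ℝ)) atTop (nhds 0))
  have hne : Nonempty (Fin n) := ⟨⟨0, Nat.pos_of_ne_zero hn0⟩⟩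
  -- Gram matrix and its inverse
  set G : Matrix (Fin n) (Fin n) ℝ := Matrix.of fun i j => x i ⬝ᵥ x j with hGdef
  have hGsym : Gᵀ = G := by
    ext i j
    simp [hGdef, dotProduct_comm]
  have hdet : IsUnit G.det := by
    rw [isUnit_iff_ne_zero]
    intro h
    obtain ⟨v, hv0, hv⟩ := Matrix.exists_mulVec_eq_zero_iff.2 h
    apply hv0
    have h2 : v ⬝ᵥ (G *ᵥ v) = 0 := by rw [hv]; simp
    rw [hGdef, gram_quad x v] at h2
    have h3 : ∀ k, ∑ i, v i * x i k = 0 := by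
      intro k
      have := (Finset.sum_eq_zero_iff_of_nonneg (fun k _ => sq_nonneg _)).1 h2 k
        (Finset.mem_univ k)
      exact pow_eq_zero_iff (two_ne_zero) |>.1 this
    have h4 : ∑ i, v i • x i = 0 := by
      funext k
      simpa [Finset.sum_apply] using h3 k
    funext i
    exact Fintype.linearIndependent_iff.1 hind v h4 i
  set H : Matrix (Fin n) (Fin n) ℝ := G⁻¹ with hHdef
  have hGH : G * H = 1 := Matrix.mul_nonsing_inv _ hdet
  have hHG : H * G = 1 := Matrix.nonsing_inv_mul _ hdet
  have hHsym : Hᵀ = H := by rw [hHdef, Matrix.transpose_nonsing_inv, hGsym]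
  -- constants
  set cG : ℝ := ∑ i, ∑ j, |G i j| with hcGdef
  have hcG0 : 0 ≤ cG := Finset.sum_nonneg fun i _ =>
    Finset.sum_nonneg fun j _ => abs_nonneg _
  set cH : ℝ := (∑ i, ∑ j, |H i j|) + 1 with hcHdef
  have hcH0 : (0 : ℝ) < cH := by
    have : 0 ≤ ∑ i, ∑ j, |H i j| := Finset.sum_nonneg fun i _ =>
      Finset.sum_nonneg fun j _ => abs_nonneg _
    rw [hcHdef]; linarith
  set B : ℝ := ∑ i, ∑ k, x i k ^ 2 with hBdef
  have hB0 : 0 ≤ B := Finset.sum_nonneg fun i _ =>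
    Finset.sum_nonneg fun k _ => sq_nonneg _
  set δ : ℝ := (Finset.univ.inf' Finset.univ_nonempty qlim) / 2 with hδdef
  have hinfpos : 0 < Finset.univ.inf' Finset.univ_nonempty qlim :=
    (Finset.lt_inf'_iff _).2 fun i _ => hqpos i
  have hδ0 : 0 < δ := by rw [hδdef]; linarith
  have hδlt : ∀ i, δ < qlim i := by
    intro i
    have h1 : Finset.univ.inf' Finset.univ_nonempty qlim ≤ qlim i :=
      Finset.inf'_le _ (Finset.mem_univ i)
    rw [hδdef]; linarith
  refine ⟨min (1 / (cG + 1)) (cH / δ), lt_min (by positivity) (by positivity), ?_⟩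
  intro η hη hηle θ hθ
  have hηcG : η * cG ≤ 1 := by
    have h1 : η ≤ 1 / (cG + 1) := le_trans hηle (min_le_left _ _)
    rw [le_div_iff₀ (by linarith)] at h1
    nlinarith
  have hηδ : η * δ ≤ cH := by
    have h1 : η ≤ cH / δ := le_trans hηle (min_le_right _ _)
    rw [le_div_iff₀ hδ0] at h1
    linarith
  set r : ℕ → Fin n → ℝ := fun t i => θ t ⬝ᵥ x i - y i with hrdef
  set V : ℕ → ℝ := fun t => r t ⬝ᵥ (H *ᵥ r t) with hVdef
  set P : ℕ → ℝ := fun t => ∑ i, q t i * r t i ^ 2 with hPdef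
  set R : ℕ → ℝ := fun t => ∑ i, r t i ^ 2 with hRdef
  have hP0 : ∀ t, 0 ≤ P t := fun t => Finset.sum_nonneg fun i _ =>
    mul_nonneg (hqnn t i) (sq_nonneg _)
  have hR0 : ∀ t, 0 ≤ R t := fun t => Finset.sum_nonneg fun i _ => sq_nonneg _
  have hq1 : ∀ t i, q t i ≤ 1 := fun t i => (hqsum t) ▸
    Finset.single_le_sum (fun j _ => hqnn t j) (Finset.mem_univ i)
  -- the residual recursion
  have hrec : ∀ t, r (t + 1) = r t - η • (G *ᵥ fun i => q t i * r t i) := by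
    intro t
    funext j
    have h1 : r (t + 1) j = θ (t + 1) ⬝ᵥ x j - y j := rfl
    rw [h1, hθ t]
    have h2 : (∑ i, q t i • ((θ t ⬝ᵥ x i - y i) • x i)) ⬝ᵥ x j
        = ∑ i, q t i * ((θ t ⬝ᵥ x i - y i) * (x i ⬝ᵥ x j)) := by
      rw [sum_dot]
      refine Finset.sum_congr rfl fun i _ => ?_
      rw [smul_dotProduct, smul_dotProduct, smul_eq_mul, smul_eq_mul]
    rw [sub_dotProduct, smul_dotProduct, h2]
    have h3 : (G *ᵥ fun i => q t i * r t i) j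
        = ∑ i, (x j ⬝ᵥ x i) * (q t i * r t i) := by
      simp [Matrix.mulVec, dotProduct, hGdef]
    simp only [Pi.sub_apply, Pi.smul_apply, smul_eq_mul, h3]
    have h4 : ∑ i, q t i * ((θ t ⬝ᵥ x i - y i) * (x i ⬝ᵥ x j))
        = ∑ i, (x j ⬝ᵥ x i) * (q t i * r t i) := by
      refine Finset.sum_congr rfl fun i _ => ?_
      rw [dotProduct_comm (x j) (x i)]
      have : r t i = θ t ⬝ᵥ x i - y i := rfl
      rw [this]; ring
    rw [h4]
    have : r t j = θ t ⬝ᵥ x j - y j := rfl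
    rw [this]; ring
  -- one-step Lyapunov decrease
  have hstep : ∀ t, V (t + 1) ≤ V t - η * P t := by
    intro t
    set u : Fin n → ℝ := fun i => q t i * r t i with hu
    have hrt : r (t + 1) = r t - η • (G *ᵥ u) := hrec t
    have hHu : H *ᵥ (G *ᵥ u) = u := by
      rw [Matrix.mulVec_mulVec, hHG, Matrix.one_mulVec]
    have hcross : (G *ᵥ u) ⬝ᵥ (H *ᵥ r t) = u ⬝ᵥ r t := by
      rw [dot_swap, hGsym, Matrix.mulVec_mulVec, hGH, Matrix.one_mulVec]
    have hur : u ⬝ᵥ r t = P t := by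
      simp only [dotProduct, hu, hPdef]
      exact Finset.sum_congr rfl fun i _ => by ring
    have hru : r t ⬝ᵥ u = P t := by rw [dotProduct_comm]; exact hur
    have hcross2 : (G *ᵥ u) ⬝ᵥ u = u ⬝ᵥ (G *ᵥ u) := dotProduct_comm _ _
    have hV' : V (t + 1) = V t - 2 * η * P t + η ^ 2 * (u ⬝ᵥ (G *ᵥ u)) := by
      have e1 : V (t + 1) = (r t - η • (G *ᵥ u)) ⬝ᵥ (H *ᵥ r t - η • u) := by
        rw [hVdef]
        simp only [hrt]
        rw [Matrix.mulVec_sub, Matrix.mulVec_smul, hHu]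
      rw [e1]
      simp only [sub_dotProduct, dotProduct_sub, smul_dotProduct,
        dotProduct_smul, smul_eq_mul]
      rw [hcross, hur, hru, hcross2, hVdef]
      ring
    have hGu : u ⬝ᵥ (G *ᵥ u) ≤ cG * ∑ i, u i ^ 2 := quadform_le G u
    have huP : ∑ i, u i ^ 2 ≤ P t := by
      refine Finset.sum_le_sum fun i _ => ?_
      have h1 := hq1 t i
      have h2 := hqnn t i
      have h3 : u i = q t i * r t i := rfl
      rw [h3]
      calc (q t i * r t i) ^ 2 = q t i * q t i * r t i ^ 2 := by ring
        _ ≤ q t i * r t i ^ 2 :=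
          mul_le_mul_of_nonneg_right (by nlinarith) (sq_nonneg _)
    have hkey : η ^ 2 * (u ⬝ᵥ (G *ᵥ u)) ≤ η * P t := by
      have h1 : u ⬝ᵥ (G *ᵥ u) ≤ cG * P t :=
        le_trans hGu (mul_le_mul_of_nonneg_left huP hcG0)
      nlinarith [mul_le_mul_of_nonneg_left h1 (sq_nonneg η),
        mul_le_mul_of_nonneg_right hηcG (mul_nonneg hη.le (hP0 t))]
    linarith
  -- upper bound of V by R
  have hVR : ∀ t, V t ≤ cH * R t := by
    intro t
    have h1 := quadform_le H (r t)
    have h2 : (∑ i, ∑ j, |H i j|) * R t ≤ cH * R t := by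
      rw [hcHdef]
      nlinarith [hR0 t]
    exact le_trans h1 h2
  -- eventual lower bound on the weights
  have hev : ∀ᶠ t in atTop, ∀ i, δ ≤ q t i :=
    eventually_all.2 fun i =>
      ((hconv i).eventually (eventually_gt_nhds (hδlt i))).mono fun t h => h.le
  obtain ⟨T, hT⟩ := eventually_atTop.1 hev
  set ρ : ℝ := 1 - η * δ / cH with hρdef
  have hρ0 : 0 ≤ ρ := by
    rw [hρdef]
    have : η * δ / cH ≤ 1 := (div_le_one hcH0).2 hηδ
    linarith
  have hρ1 : ρ < 1 := by
    rw [hρdef]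
    have : 0 < η * δ / cH := div_pos (mul_pos hη hδ0) hcH0
    linarith
  -- contraction after time T
  have hcontr : ∀ t, T ≤ t → V (t + 1) ≤ ρ * V t := by
    intro t ht
    have h1 : δ * R t ≤ P t := by
      rw [hRdef, hPdef, Finset.mul_sum]
      exact Finset.sum_le_sum fun i _ =>
        mul_le_mul_of_nonneg_right (hT t ht i) (sq_nonneg _)
    have h2 : V t / cH ≤ R t := (div_le_iff₀ hcH0).2 (by nlinarith [hVR t])
    have h3 : η * (δ * R t) ≤ η * P t := mul_le_mul_of_nonneg_left h1 hη.le
    have h4 : η * δ * (V t / cH) ≤ η * (δ * R t) := by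
      have := mul_le_mul_of_nonneg_left h2 (mul_nonneg hη.le hδ0.le)
      linarith [this]
    have h5 := hstep t
    have h6 : ρ * V t = V t - η * δ * (V t / cH) := by
      rw [hρdef]; field_simp
    calc V (t + 1) ≤ V t - η * P t := hstep t
      _ ≤ V t - η * (δ * R t) := by linarith
      _ ≤ V t - η * δ * (V t / cH) := by linarith
      _ = ρ * V t := h6.symm
  -- geometric decay
  have hgeo : ∀ k, V (T + k) ≤ ρ ^ k * V T := by
    intro k
    induction k with
    | zero => simp
    | succ k ih =>
      have h1 : V (T + k + 1) ≤ ρ * V (T + k) := hcontr (T + k) (Nat.le_add_right T k)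
      have h2 : ρ * V (T + k) ≤ ρ * (ρ ^ k * V T) := mul_le_mul_of_nonneg_left ih hρ0
      calc V (T + (k + 1)) = V (T + k + 1) := by ring_nf
        _ ≤ ρ * (ρ ^ k * V T) := le_trans h1 h2
        _ = ρ ^ (k + 1) * V T := by ring
  -- lower bound of V by R
  have hRV : ∀ t, R t ≤ B * V t := by
    intro t
    set s : Fin n → ℝ := H *ᵥ r t with hs
    have hrs : G *ᵥ s = r t := by
      rw [hs, Matrix.mulVec_mulVec, hGH, Matrix.one_mulVec]
    set w : Fin d → ℝ := fun k => ∑ i, s i * x i k with hw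
    have hri : ∀ i, r t i = ∑ k, x i k * w k := by
      intro i
      rw [← hrs]
      have h1 : (G *ᵥ s) i = ∑ j, (∑ k, x i k * x j k) * s j := by
        simp [Matrix.mulVec, dotProduct, hGdef]
      rw [h1]
      simp only [hw, Finset.sum_mul, Finset.mul_sum]
      rw [Finset.sum_comm]
      exact Finset.sum_congr rfl fun j _ => Finset.sum_congr rfl fun k _ => by ring
    have hVw : V t = ∑ k, w k ^ 2 := by
      have h1 : V t = ∑ i, r t i * s i := rfl
      rw [h1]
      calc ∑ i, r t i * s i = ∑ i, (∑ k, x i k * w k) * s i := by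
            exact Finset.sum_congr rfl fun i _ => by rw [← hri i]
        _ = ∑ i, ∑ k, x i k * w k * s i := by
            exact Finset.sum_congr rfl fun i _ => Finset.sum_mul _ _ _
        _ = ∑ k, ∑ i, x i k * w k * s i := Finset.sum_comm
        _ = ∑ k, w k ^ 2 := by
            refine Finset.sum_congr rfl fun k _ => ?_
            have h2 : ∑ i, x i k * w k * s i = (∑ i, s i * x i k) * w k := by
              rw [Finset.sum_mul]
              exact Finset.sum_congr rfl fun i _ => by ring
            have h3 : (∑ i, s i * x i k) = w k := rfl
            rw [h2, h3]
            ring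
    calc R t = ∑ i, (∑ k, x i k * w k) ^ 2 := by
          exact Finset.sum_congr rfl fun i _ => by rw [← hri i]
      _ ≤ ∑ i, (∑ k, x i k ^ 2) * (∑ k, w k ^ 2) :=
          Finset.sum_le_sum fun i _ => Finset.sum_mul_sq_le_sq_mul_sq _ _ _
      _ = B * ∑ k, w k ^ 2 := by rw [hBdef, Finset.sum_mul]
      _ = B * V t := by rw [hVw]
  -- conclude by squeezing
  show Tendsto (fun t => (1 / (n : ℝ)) * R t) atTop (nhds 0)
  have hn0' : (0 : ℝ) ≤ 1 / (n : ℝ) := by positivity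
  have htend : Tendsto (fun t : ℕ => (1 / (n : ℝ)) * (B * V T) * ρ ^ (t - T)) atTop (nhds 0) := by
    have h1 : Tendsto (fun t : ℕ => ρ ^ (t - T)) atTop (nhds 0) :=
      (tendsto_pow_atTop_nhds_zero_of_lt_one hρ0 hρ1).comp (tendsto_sub_atTop_nat T)
    simpa using h1.const_mul ((1 / (n : ℝ)) * (B * V T))
  refine squeeze_zero' (Eventually.of_forall fun t => mul_nonneg hn0' (hR0 t))
    ?_ htend
  rw [eventually_atTop]
  refine ⟨T, fun t ht => ?_⟩
  have h1 : V t ≤ ρ ^ (t - T) * V T := by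
    have := hgeo (t - T)
    rwa [Nat.add_sub_cancel' ht] at this
  have h2 : R t ≤ B * (ρ ^ (t - T) * V T) :=
    le_trans (hRV t) (mul_le_mul_of_nonneg_left h1 hB0)
  calc (1 / (n : ℝ)) * R t ≤ (1 / (n : ℝ)) * (B * (ρ ^ (t - T) * V T)) :=
        mul_le_mul_of_nonneg_left h2 hn0'
    _ = (1 / (n : ℝ)) * (B * V T) * ρ ^ (t - T) := by ring
end

section
/- For independent random masking on the hypercube X = {−1,1}^d with uniform distribution, where each coordinate is independently replaced by 0 with probability α ∈ (0,1), the context complexity satisfies κ² = ∫ P^+(a|x)²/P_A(a) da = (2 − α)^d for every x ∈ X. -/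
set_option maxHeartbeats 1000000 in
/-- For independent random masking on the uniform hypercube `{−1,1}^d` (encoded as
`Fin d → Bool`, with masked coordinates `none`), with mask probability `α ∈ (0,1)`,
the context complexity satisfies `κ² = ∑_a P⁺(a|x)²/P_A(a) = (2 − α)^d` for every
input `x`. -/
theorem stmt17 (d : ℕ) (α : ℝ) (hα0 : 0 < α) (hα1 : α < 1)
    (Pplus : (Fin d → Option Bool) → (Fin d → Bool) → ℝ)
    (hP : ∀ a x, Pplus a x =
      ∏ i, (if a i = none then α else if a i = some (x i) then 1 - α else 0))
    (PA : (Fin d → Option Bool) → ℝ)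
    (hPA : ∀ a, PA a = (∑ x : Fin d → Bool, Pplus a x) / 2 ^ d) :
    ∀ x : Fin d → Bool,
      ∑ a : Fin d → Option Bool, (Pplus a x) ^ 2 / PA a = (2 - α) ^ d := by
  intro x
  have h1 : (0:ℝ) < 1 - α := by linarith
  have hα0' : α ≠ 0 := ne_of_gt hα0
  have h1' : (1:ℝ) - α ≠ 0 := ne_of_gt h1
  have hPAprod : ∀ a, PA a = ∏ i, (if a i = none then α else (1-α)/2) := by
    intro a
    rw [hPA]
    have hsum : ∑ y : Fin d → Bool, Pplus a y
        = ∏ i, (if a i = none then 2*α else (1-α)) := by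
      calc ∑ y : Fin d → Bool, Pplus a y
          = ∑ y : Fin d → Bool,
              ∏ i, (if a i = none then α else if a i = some (y i) then 1-α else 0) :=
            Finset.sum_congr rfl (fun y _ => hP a y)
        _ = ∏ i, ∑ b : Bool, (if a i = none then α else if a i = some b then 1-α else 0) :=
            (Fintype.prod_sum (fun i b => if a i = none then α else if a i = some b then 1-α else 0)).symm
        _ = ∏ i, (if a i = none then 2*α else (1-α)) := by
            apply Finset.prod_congr rfl; intro i _
            cases h : a i with
            | none => simp [Fintype.sum_bool]; try ring
            | some c => cases c <;> simp [Fintype.sum_bool]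
    rw [hsum]
    rw [show (2:ℝ)^d = ∏ _i : Fin d, (2:ℝ) by simp, ← Finset.prod_div_distrib]
    apply Finset.prod_congr rfl; intro i _
    split <;> ring
  calc ∑ a : Fin d → Option Bool, (Pplus a x) ^ 2 / PA a
      = ∑ a : Fin d → Option Bool,
          ∏ i, ((if a i = none then α else if a i = some (x i) then 1-α else 0)^2
                / (if a i = none then α else (1-α)/2)) := by
        apply Finset.sum_congr rfl; intro a _
        rw [hP, hPAprod, ← Finset.prod_pow, ← Finset.prod_div_distrib]
    _ = ∏ i, ∑ o : Option Bool, ((if o = none then α else if o = some (x i) then 1-α else 0)^2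
                / (if o = none then α else (1-α)/2)) :=
          (Fintype.prod_sum (fun i o => (if o = none then α else if o = some (x i) then 1-α else 0)^2
                / (if o = none then α else (1-α)/2))).symm
    _ = ∏ _i : Fin d, (2 - α) := by
        apply Finset.prod_congr rfl; intro i _
        rw [Fintype.sum_option, Fintype.sum_bool]
        cases h : x i <;> simp <;> field_simp <;> ring
    _ = (2 - α) ^ d := by simp
end
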